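/- Let λ > 0, γ ∈ (0,1), β ∈ [0,1/2), C₁ > 0, and α₀ < α*. Suppose w : [0,(α*-α₀)/λ) → B_{α*} satisfies M := sup_{α∈(α₀,α*], 0≤t<(α-α₀)/λ} (α-α₀-λt)^γ ‖w(t)‖_α < ∞, and U(t,s) satisfies ‖U(t,s)y‖_α ≤ C₁ ‖y‖_{α'} for all α' < α (case β = 0). Then for all α ∈ (α₀,α*] and t ∈ [0,(α-α₀)/λ), one has ‖∫₀ᵗ U(t,s) w(s) ds‖_α ≤ C₁ M (α*-α₀)^{1-γ} / (λ(1-γ)). -/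

import Mathlib

/-!
Fix `s ∈ [0, t]`. For every intermediate index `α' ∈ (α₀ + λs, α)` the smoothing bound for `U`
followed by the weighted bound for `w` give
`N_α (U(t,s) w(s)) ≤ C₁ M (α' - α₀ - λs)^{-γ}`; letting `α' → α` removes the loss coming from the
choice of `α'`. Integrating the singular weight `(α - α₀ - λs)^{-γ}`, which is integrable because
`γ < 1`, over `[0, t]` gives at most `(α - α₀)^{1-γ} / (λ(1-γ)) ≤ (α* - α₀)^{1-γ} / (λ(1-γ))`.
-/

open Set Filter

lemma le_of_forall_mem_Ioo_le_of_continuousWithinAt {g : ℝ → ℝ} {a b v : ℝ} (hab : a < b)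
    (hg : ContinuousWithinAt g (Iio b) b) (h : ∀ x ∈ Ioo a b, v ≤ g x) : v ≤ g b :=
  ge_of_tendsto hg (eventually_of_mem (Ioo_mem_nhdsLT hab) h)

lemma intervalIntegrable_sub_mul_rpow {c lam γ t : ℝ} (hlam : 0 < lam) (ht : 0 ≤ t)
    (hct : lam * t < c) :
    IntervalIntegrable (fun s => (c - lam * s) ^ (-γ)) MeasureTheory.volume 0 t := by
  refine ContinuousOn.intervalIntegrable fun s hs => ?_
  rw [uIcc_of_le ht] at hs
  have hpos : 0 < c - lam * s := by nlinarith [hs.2]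
  exact ((continuousAt_const.sub (continuousAt_const.mul continuousAt_id)).rpow_const
    (.inl hpos.ne')).continuousWithinAt

lemma integral_sub_mul_rpow_neg_le {c lam γ t : ℝ} (hlam : 0 < lam) (hγ : γ < 1)
    (hct : lam * t < c) :
    ∫ s in (0 : ℝ)..t, (c - lam * s) ^ (-γ) ≤ c ^ (1 - γ) / (lam * (1 - γ)) := by
  have hγ' : 0 < 1 - γ := by linarith
  rw [intervalIntegral.integral_comp_sub_mul (fun x => x ^ (-γ)) hlam.ne',
    integral_rpow (.inl (by linarith)), smul_eq_mul, mul_zero, sub_zero,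
    show -γ + 1 = 1 - γ by ring, inv_mul_eq_div, div_div, mul_comm (1 - γ)]
  gcongr
  have : 0 ≤ (c - lam * t) ^ (1 - γ) := Real.rpow_nonneg (by linarith) _
  linarith

lemma norm_evolution_apply_le {E : Type*} [AddCommGroup E] [Module ℝ E]
    {N : ℝ → E → ℝ} {γ lam C₁ α₀ αs M : ℝ} (hC₁ : 0 ≤ C₁) {U : ℝ → ℝ → E →ₗ[ℝ] E} {w : ℝ → E}
    (hU : ∀ ⦃α' α : ℝ⦄, α₀ ≤ α' → α' < α → α ≤ αs → ∀ t s (y : E),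
      N α (U t s y) ≤ C₁ * N α' y)
    (hw : ∀ α t, α₀ < α → α ≤ αs → 0 ≤ t → t < (α - α₀) / lam →
      (α - α₀ - lam * t) ^ γ * N α (w t) ≤ M)
    (hlam : 0 < lam) {α t s : ℝ} (hα : α ≤ αs) (hs : 0 ≤ s) (hsα : lam * s < α - α₀) :
    N α (U t s (w s)) ≤ C₁ * M * (α - α₀ - lam * s) ^ (-γ) := by
  have hls : 0 ≤ lam * s := mul_nonneg hlam.le hs
  refine le_of_forall_mem_Ioo_le_of_continuousWithinAt
    (g := fun α' => C₁ * M * (α' - α₀ - lam * s) ^ (-γ))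
    (by linarith : α₀ + lam * s < α)
    (continuousAt_const.mul (((continuousAt_id.sub continuousAt_const).sub continuousAt_const).rpow_const
      (.inl (show α - α₀ - lam * s ≠ 0 by linarith)))).continuousWithinAt ?_
  rintro α' ⟨hα'_gt, hα'_lt⟩
  have hgap : 0 < α' - α₀ - lam * s := by linarith
  have hw' : N α' (w s) ≤ M * (α' - α₀ - lam * s) ^ (-γ) := by
    rw [Real.rpow_neg hgap.le, ← div_eq_mul_inv, le_div_iff₀ (Real.rpow_pos_of_pos hgap γ),
      mul_comm]
    exact hw α' s (by linarith) (by linarith) hs (by rw [lt_div_iff₀ hlam]; linarith)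
  calc N α (U t s (w s)) ≤ C₁ * N α' (w s) := hU (by linarith) hα'_lt hα t s (w s)
    _ ≤ C₁ * (M * (α' - α₀ - lam * s) ^ (-γ)) := by gcongr
    _ = C₁ * M * (α' - α₀ - lam * s) ^ (-γ) := by ring

theorem stmt10_general (E : Type*) [NormedAddCommGroup E] [NormedSpace ℝ E]
    (N : ℝ → E → ℝ) (γ lam C₁ α₀ αs M : ℝ)
    (hγ1 : γ < 1) (hlam : 0 < lam) (hC₁ : 0 < C₁)
    (hM : 0 ≤ M)
    (U : ℝ → ℝ → E →ₗ[ℝ] E) (w : ℝ → E)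
    -- evolution bound with β = 0
    (hU : ∀ ⦃α' α : ℝ⦄, α₀ ≤ α' → α' < α → α ≤ αs → ∀ t s (y : E),
      N α (U t s y) ≤ C₁ * N α' y)
    -- `M` bounds the weighted norm `‖w‖^{(γ)}`
    (hw : ∀ α t, α₀ < α → α ≤ αs → 0 ≤ t → t < (α - α₀) / lam →
      (α - α₀ - lam * t) ^ γ * N α (w t) ≤ M)
    -- the scale norms are compatible with the Bochner integral
    (hint : ∀ α t, 0 ≤ t →
      N α (∫ s in (0:ℝ)..t, U t s (w s)) ≤ ∫ s in (0:ℝ)..t, N α (U t s (w s)))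
    (hmeas : ∀ α t, IntervalIntegrable (fun s => N α (U t s (w s)))
      MeasureTheory.volume 0 t) :
    ∀ α t, α₀ < α → α ≤ αs → 0 ≤ t → t < (α - α₀) / lam →
      N α (∫ s in (0:ℝ)..t, U t s (w s)) ≤
        C₁ * M * (αs - α₀) ^ (1 - γ) / (lam * (1 - γ)) := by
  intro α t hα₀ hαs ht htα
  have hct : lam * t < α - α₀ := by rwa [lt_div_iff₀ hlam, mul_comm] at htα
  calc N α (∫ s in (0:ℝ)..t, U t s (w s))
      ≤ ∫ s in (0:ℝ)..t, N α (U t s (w s)) := hint α t ht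
    _ ≤ ∫ s in (0:ℝ)..t, C₁ * M * (α - α₀ - lam * s) ^ (-γ) :=
        intervalIntegral.integral_mono_on ht (hmeas α t)
          ((intervalIntegrable_sub_mul_rpow hlam ht hct).const_mul _) fun s hs =>
          norm_evolution_apply_le hC₁.le hU hw hlam hαs hs.1 (by nlinarith [hs.2])
    _ = C₁ * M * ∫ s in (0:ℝ)..t, (α - α₀ - lam * s) ^ (-γ) :=
        intervalIntegral.integral_const_mul _ _
    _ ≤ C₁ * M * ((α - α₀) ^ (1 - γ) / (lam * (1 - γ))) := by
        gcongr; exact integral_sub_mul_rpow_neg_le hlam hγ1 hct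
    _ ≤ C₁ * M * (αs - α₀) ^ (1 - γ) / (lam * (1 - γ)) := by
        rw [mul_div_assoc]
        gcongr

theorem stmt10 (E : Type*) [NormedAddCommGroup E] [NormedSpace ℝ E] [CompleteSpace E]
    (N : ℝ → E → ℝ) (γ lam C₁ α₀ αs M : ℝ)
    (hγ0 : 0 < γ) (hγ1 : γ < 1) (hlam : 0 < lam) (hC₁ : 0 < C₁) (hα : α₀ < αs)
    (hM : 0 ≤ M)
    (U : ℝ → ℝ → E →ₗ[ℝ] E) (w : ℝ → E)
    (hN : ∀ α (y : E), 0 ≤ N α y)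
    -- evolution bound with β = 0
    (hU : ∀ ⦃α' α : ℝ⦄, α₀ ≤ α' → α' < α → α ≤ αs → ∀ t s (y : E),
      N α (U t s y) ≤ C₁ * N α' y)
    -- `M` bounds the weighted norm `‖w‖^{(γ)}`
    (hw : ∀ α t, α₀ < α → α ≤ αs → 0 ≤ t → t < (α - α₀) / lam →
      (α - α₀ - lam * t) ^ γ * N α (w t) ≤ M)
    -- the scale norms are compatible with the Bochner integral
    (hint : ∀ α t, 0 ≤ t →
      N α (∫ s in (0:ℝ)..t, U t s (w s)) ≤ ∫ s in (0:ℝ)..t, N α (U t s (w s)))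
    (hmeas : ∀ α t, IntervalIntegrable (fun s => N α (U t s (w s)))
      MeasureTheory.volume 0 t) :
    ∀ α t, α₀ < α → α ≤ αs → 0 ≤ t → t < (α - α₀) / lam →
      N α (∫ s in (0:ℝ)..t, U t s (w s)) ≤
        C₁ * M * (αs - α₀) ^ (1 - γ) / (lam * (1 - γ)) :=
  stmt10_general E N γ lam C₁ α₀ αs M hγ1 hlam hC₁ hM U w hU hw hint hmeas
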